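/- Let n ≥ 1 be a natural number, a, b ∈ ℂ, and let F(z) = z^n + a/z^n + b (extended to a total function on ℂ using the convention a/0 = 0). Let B = {z ∈ ℂ : the forward orbit {F^[m](z) : m ∈ ℕ} is a bounded subset of ℂ}. Then for every ζ ∈ ℂ with ζ^n = 1 and |ζ| = 1, and every z ∈ ℂ, one has z ∈ B if and only if ζ·z ∈ B. -/

import Mathlib

open Set Bornology

theorem Function.range_iterate_eq_insert {α : Type*} (f : α → α) (x : α) :
    range (fun m : ℕ => f^[m] x) = insert x (range fun m : ℕ => f^[m] (f x)) := by
  ext y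
  simp only [mem_range, mem_insert_iff]
  constructor
  · rintro ⟨_ | m, rfl⟩
    · exact .inl rfl
    · exact .inr ⟨m, Function.iterate_succ_apply f m x⟩
  · rintro (rfl | ⟨m, rfl⟩)
    · exact ⟨0, rfl⟩
    · exact ⟨m + 1, Function.iterate_succ_apply f m x⟩

theorem Function.isBounded_range_iterate_congr {α : Type*} [Bornology α] {f : α → α} {x y : α}
    (h : f x = f y) :
    IsBounded (range fun m : ℕ => f^[m] x) ↔ IsBounded (range fun m : ℕ => f^[m] y) := by
  rw [range_iterate_eq_insert, range_iterate_eq_insert f y, h, isBounded_insert, isBounded_insert]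

theorem mcmullen_map_mul_of_pow_eq_one {n : ℕ} {a b ζ : ℂ} {F : ℂ → ℂ}
    (hF : ∀ z : ℂ, F z = z ^ n + a / z ^ n + b) (hζ : ζ ^ n = 1) (z : ℂ) :
    F (ζ * z) = F z := by
  rw [hF, hF, mul_pow, hζ, one_mul]

theorem mcmullen_bounded_orbit_symmetry_general
    (n : ℕ) (a b : ℂ)
    (F : ℂ → ℂ) (hF : ∀ z : ℂ, F z = z ^ n + a / z ^ n + b)
    (B : Set ℂ)
    (hB : B = {z : ℂ | Bornology.IsBounded (Set.range fun m : ℕ => F^[m] z)}) :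
    ∀ ζ : ℂ, ζ ^ n = 1 → ‖ζ‖ = 1 → ∀ z : ℂ, (z ∈ B ↔ ζ * z ∈ B) := by
  intro ζ hζ _ z
  subst hB
  exact (Function.isBounded_range_iterate_congr (mcmullen_map_mul_of_pow_eq_one hF hζ z)).symm

/-- The set of points with bounded forward orbit under the generalized McMullen map
`F(z) = z^n + a/z^n + b` (with the convention `a/0 = 0`) is invariant under
multiplication by an `n`-th root of unity of modulus one. -/
theorem mcmullen_bounded_orbit_symmetry
    (n : ℕ) (hn : 1 ≤ n) (a b : ℂ)
    (F : ℂ → ℂ) (hF : ∀ z : ℂ, F z = z ^ n + a / z ^ n + b)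
    (B : Set ℂ)
    (hB : B = {z : ℂ | Bornology.IsBounded (Set.range fun m : ℕ => F^[m] z)}) :
    ∀ ζ : ℂ, ζ ^ n = 1 → ‖ζ‖ = 1 → ∀ z : ℂ, (z ∈ B ↔ ζ * z ∈ B) :=
  mcmullen_bounded_orbit_symmetry_general n a b F hF B hB
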